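/- Let A_δ (δ > 1) be the simple perturbed PCM with Perron eigenvector w, and suppose w' is a positive vector with w'_j = w_j for all j ≥ 3 that approximates A_δ at least as well as w entrywise (|a_{ij} − w'_i/w'_j| ≤ |a_{ij} − w_i/w_j| for all i,j). Then w'_1 ≤ w_1 and w'_2 ≥ w_2, and if (w'_1, w'_2) ≠ (w_1, w_2) then w'_1/w'_2 < w_1/w_2 < a_{12}, so w' approximates a_{12} strictly worse than w does. -/

import Mathlib

/-- A pairwise comparison matrix: positive entries with the reciprocal property. -/
def IsPCM {n : ℕ} (A : Matrix (Fin n) (Fin n) ℝ) : Prop :=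
  (∀ i j, 0 < A i j) ∧ (∀ i j, A j i = 1 / A i j)

/-- A PCM is consistent if `a i k * a k j = a i j` for all `i j k`. -/
def IsConsistent {n : ℕ} (A : Matrix (Fin n) (Fin n) ℝ) : Prop :=
  ∀ i j k, A i k * A k j = A i j

/-- `lam` together with a positive eigenvector `w` forms the Perron eigenpair of `A`
(for a positive matrix, the eigenvalue admitting a positive eigenvector is exactly
the Perron (maximal) eigenvalue). -/
def IsPerronEigenpair {n : ℕ} (A : Matrix (Fin n) (Fin n) ℝ) (lam : ℝ)
    (w : Fin n → ℝ) : Prop :=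
  (∀ i, 0 < w i) ∧ A.mulVec w = lam • w

/-- The simple perturbed PCM `A_δ`: the consistent PCM generated by positive weights
`x` (with `x 0 = 1`), whose entry in position (1,2) (0-based: (0,1)) is multiplied
by `δ` and its reciprocal by `1/δ`. -/
noncomputable def simplePerturbed {n : ℕ} (x : Fin n → ℝ) (δ : ℝ) : Matrix (Fin n) (Fin n) ℝ :=
  fun i j =>
    if i.val = 0 ∧ j.val = 1 then x j * δ
    else if i.val = 1 ∧ j.val = 0 then 1 / (x i * δ)
    else x j / x i

/-- A positive weight vector `w` is efficient for `A` if no positive vector `w'`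
approximates every entry at least as well, and some entry strictly better. -/
def IsEfficient {n : ℕ} (A : Matrix (Fin n) (Fin n) ℝ) (w : Fin n → ℝ) : Prop :=
  ¬ ∃ w' : Fin n → ℝ, (∀ i, 0 < w' i) ∧
      (∀ i j, |A i j - w' i / w' j| ≤ |A i j - w i / w j|) ∧
      (∃ k l, |A k l - w' k / w' l| < |A k l - w k / w l|)

/-!
Writing `v j = x j * w j`, the eigen-equations of `A_δ` read `λ v₀ = S + (δ - 1) v₁`,
`λ v₁ = S - (1 - 1/δ) v₀` and `λ vⱼ = S` for `j ≥ 2`, where `S = ∑ vⱼ`. Since `λ > 0` this gives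
`v₁ < vⱼ < v₀ < δ v₁`, i.e. `w` overestimates `a₀ⱼ`, underestimates `a₁ⱼ` and underestimates `a₀₁`.
A vector `w'` with `w'ⱼ = wⱼ` that is no worse on the entries `(0, j)` and `(1, j)` must therefore
have `w'₀ ≤ w₀` and `w'₁ ≥ w₁`, which pushes `w'₀ / w'₁` further below `a₀₁`.
-/

lemma le_of_abs_sub_div_le_of_le_div {a p q r : ℝ} (hr : 0 < r) (ha : a ≤ p / r)
    (h : |a - q / r| ≤ |a - p / r|) : q ≤ p := by
  rw [abs_of_nonpos (sub_nonpos.2 ha)] at h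
  have : q / r ≤ p / r := by linarith [(abs_le.1 h).1]
  exact (div_le_div_iff_of_pos_right hr).1 this

lemma le_of_abs_sub_div_le_of_div_le {a p q r : ℝ} (hr : 0 < r) (ha : p / r ≤ a)
    (h : |a - q / r| ≤ |a - p / r|) : p ≤ q := by
  rw [abs_of_nonneg (sub_nonneg.2 ha)] at h
  have : p / r ≤ q / r := by linarith [(abs_le.1 h).2]
  exact (div_le_div_iff_of_pos_right hr).1 this

lemma perturbed_weights_order {lam S v₀ v₁ v₂ δ : ℝ} (hδ : 1 < δ)
    (h₀ : 0 < v₀) (h₁ : 0 < v₁) (h₂ : 0 < v₂) (hS : v₀ + v₁ + v₂ ≤ S)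
    (e₀ : lam * v₀ = S + (δ - 1) * v₁) (e₁ : lam * v₁ = S - (1 - 1 / δ) * v₀)
    (e₂ : lam * v₂ = S) :
    v₂ < v₀ ∧ v₁ < v₂ ∧ v₀ < δ * v₁ := by
  have hlam : 0 < lam := pos_of_mul_pos_left (by linarith) h₂.le
  have hδ' : 0 < 1 - 1 / δ := sub_pos.2 ((div_lt_one (by linarith)).2 hδ)
  refine ⟨?_, ?_, ?_⟩
  · have : lam * (v₀ - v₂) = (δ - 1) * v₁ := by linear_combination e₀ - e₂
    nlinarith
  · have : lam * (v₂ - v₁) = (1 - 1 / δ) * v₀ := by linear_combination e₂ - e₁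
    nlinarith
  · have e₁' : lam * (δ * v₁) = δ * S - (δ - 1) * v₀ := by
      rw [mul_left_comm, e₁]
      field_simp
    have : lam * (δ * v₁ - v₀) = (δ - 1) * (S - v₀ - v₁) := by linear_combination e₁' - e₀
    nlinarith

section SimplePerturbed

open Matrix

variable {n : ℕ} {x : Fin n → ℝ} {δ : ℝ} {i₀ i₁ : Fin n}

lemma simplePerturbed_apply_eq_div {i j : Fin n} (h₀₁ : ¬(i.val = 0 ∧ j.val = 1))
    (h₁₀ : ¬(i.val = 1 ∧ j.val = 0)) : simplePerturbed x δ i j = x j / x i := by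
  simp [simplePerturbed, h₀₁, h₁₀]

lemma simplePerturbed_apply_zero_one (h₀ : i₀.val = 0) (h₁ : i₁.val = 1) :
    simplePerturbed x δ i₀ i₁ = x i₁ * δ := by
  simp [simplePerturbed, h₀, h₁]

lemma simplePerturbed_apply_one_zero (h₀ : i₀.val = 0) (h₁ : i₁.val = 1) :
    simplePerturbed x δ i₁ i₀ = 1 / (x i₁ * δ) := by
  simp [simplePerturbed, h₀, h₁]

variable (w : Fin n → ℝ)

lemma simplePerturbed_mulVec_zero (h₀ : i₀.val = 0) (h₁ : i₁.val = 1) (hx₀ : x i₀ = 1) :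
    (simplePerturbed x δ *ᵥ w) i₀ = ∑ k, x k * w k + (δ - 1) * (x i₁ * w i₁) := by
  have hdiff : ∑ k, (simplePerturbed x δ i₀ k * w k - x k * w k) = (δ - 1) * (x i₁ * w i₁) := by
    rw [Fintype.sum_eq_single i₁, simplePerturbed_apply_zero_one h₀ h₁]
    · ring
    intro k hk
    have hk₁ : k.val ≠ 1 := fun h => hk (Fin.ext (h.trans h₁.symm))
    rw [simplePerturbed_apply_eq_div (by omega) (by omega), hx₀, div_one, sub_self]
  rw [Finset.sum_sub_distrib] at hdiff
  simp only [Matrix.mulVec, dotProduct]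
  linarith

lemma simplePerturbed_mulVec_one (h₀ : i₀.val = 0) (h₁ : i₁.val = 1) (hx₀ : x i₀ = 1)
    (hx₁ : x i₁ ≠ 0) (hδ : δ ≠ 0) :
    x i₁ * (simplePerturbed x δ *ᵥ w) i₁ = ∑ k, x k * w k - (1 - 1 / δ) * w i₀ := by
  have hdiff : ∑ k, (x i₁ * (simplePerturbed x δ i₁ k * w k) - x k * w k) =
      -((1 - 1 / δ) * w i₀) := by
    rw [Fintype.sum_eq_single i₀, simplePerturbed_apply_one_zero h₀ h₁, hx₀]
    · field_simp
      ring
    intro k hk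
    have hk₀ : k.val ≠ 0 := fun h => hk (Fin.ext (h.trans h₀.symm))
    rw [simplePerturbed_apply_eq_div (by omega) (by omega)]
    field_simp
    ring
  rw [Finset.sum_sub_distrib, ← Finset.mul_sum] at hdiff
  simp only [Matrix.mulVec, dotProduct]
  linarith

lemma simplePerturbed_mulVec_of_two_le {j : Fin n} (hj : 2 ≤ j.val) (hxj : x j ≠ 0) :
    x j * (simplePerturbed x δ *ᵥ w) j = ∑ k, x k * w k := by
  simp only [Matrix.mulVec, dotProduct, Finset.mul_sum]
  refine Finset.sum_congr rfl fun k _ => ?_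
  rw [simplePerturbed_apply_eq_div (by omega) (by omega)]
  field_simp

variable {w}

theorem simplePerturbed_perron_ratios (hx : ∀ i, 0 < x i) (hδ : 1 < δ)
    (h₀ : i₀.val = 0) (h₁ : i₁.val = 1) (hx₀ : x i₀ = 1) {lam : ℝ}
    (hP : IsPerronEigenpair (simplePerturbed x δ) lam w) {j : Fin n} (hj : 2 ≤ j.val) :
    simplePerturbed x δ i₀ j < w i₀ / w j ∧ w i₁ / w j < simplePerturbed x δ i₁ j ∧
      w i₀ / w i₁ < simplePerturbed x δ i₀ i₁ := by
  obtain ⟨hw, heig⟩ := hP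
  have hrow (i : Fin n) : (simplePerturbed x δ *ᵥ w) i = lam * w i := congrFun heig i
  have e₀ := simplePerturbed_mulVec_zero (δ := δ) w h₀ h₁ hx₀
  have e₁ := simplePerturbed_mulVec_one w h₀ h₁ hx₀ (hx i₁).ne' (by positivity : δ ≠ 0)
  have e₂ := simplePerturbed_mulVec_of_two_le (δ := δ) w hj (hx j).ne'
  rw [hrow] at e₀ e₁ e₂
  have hS : w i₀ + x i₁ * w i₁ + x j * w j ≤ ∑ k, x k * w k := by
    have hsub := Finset.sum_le_sum_of_subset_of_nonneg (Finset.subset_univ {i₀, i₁, j})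
      fun k _ _ => (mul_pos (hx k) (hw k)).le
    have h₀₁ : i₀ ≠ i₁ := fun h => by omega
    have h₀j : i₀ ≠ j := fun h => by omega
    have h₁j : i₁ ≠ j := fun h => by omega
    rwa [Finset.sum_insert (by simp [h₀₁, h₀j]), Finset.sum_insert (by simp [h₁j]),
      Finset.sum_singleton, hx₀, one_mul, ← add_assoc] at hsub
  obtain ⟨hvj, hv₁, hv₀⟩ := perturbed_weights_order (lam := lam) hδ (hw i₀)
    (mul_pos (hx i₁) (hw i₁)) (mul_pos (hx j) (hw j)) hS (by linear_combination e₀)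
    (by linear_combination e₁) (by linear_combination e₂)
  rw [simplePerturbed_apply_eq_div (by omega) (by omega),
    simplePerturbed_apply_eq_div (by omega) (by omega),
    simplePerturbed_apply_zero_one h₀ h₁, hx₀, div_one, lt_div_iff₀ (hw j),
    div_lt_div_iff₀ (hw j) (hx i₁), div_lt_iff₀ (hw i₁)]
  exact ⟨hvj, by linarith, by linarith⟩

end SimplePerturbed

/-- if w' agrees with the Perron eigenvector w on coordinates ≥ 3
and approximates A_δ (δ > 1) at least as well entrywise, then w'₁ ≤ w₁ and
w'₂ ≥ w₂; if (w'₁, w'₂) ≠ (w₁, w₂) then w'₁/w'₂ < w₁/w₂ < a₁₂, so w'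
approximates a₁₂ strictly worse than w does. -/
theorem dominating_vector_forces_worse_a12 {n : ℕ} (hn : 3 ≤ n)
    (x : Fin n → ℝ) (hx : ∀ i, 0 < x i) (hx0 : ∀ i : Fin n, i.val = 0 → x i = 1)
    (δ : ℝ) (hδ : 1 < δ)
    (lam : ℝ) (w : Fin n → ℝ)
    (hPerron : IsPerronEigenpair (simplePerturbed x δ) lam w)
    (w' : Fin n → ℝ)
    (hagree : ∀ j : Fin n, 2 ≤ j.val → w' j = w j)
    (happrox : ∀ i j, |simplePerturbed x δ i j - w' i / w' j| ≤
      |simplePerturbed x δ i j - w i / w j|) :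
    w' ⟨0, by omega⟩ ≤ w ⟨0, by omega⟩ ∧
    w ⟨1, by omega⟩ ≤ w' ⟨1, by omega⟩ ∧
    ((w' ⟨0, by omega⟩ ≠ w ⟨0, by omega⟩ ∨ w' ⟨1, by omega⟩ ≠ w ⟨1, by omega⟩) →
      w' ⟨0, by omega⟩ / w' ⟨1, by omega⟩ < w ⟨0, by omega⟩ / w ⟨1, by omega⟩ ∧
      w ⟨0, by omega⟩ / w ⟨1, by omega⟩ <
        simplePerturbed x δ ⟨0, by omega⟩ ⟨1, by omega⟩ ∧
      |simplePerturbed x δ ⟨0, by omega⟩ ⟨1, by omega⟩ -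
          w ⟨0, by omega⟩ / w ⟨1, by omega⟩| <
        |simplePerturbed x δ ⟨0, by omega⟩ ⟨1, by omega⟩ -
          w' ⟨0, by omega⟩ / w' ⟨1, by omega⟩|) := by
  have hw := hPerron.1
  obtain ⟨h₀₂, h₁₂, h₀₁⟩ :=
    simplePerturbed_perron_ratios (i₀ := ⟨0, by omega⟩) (i₁ := ⟨1, by omega⟩) (j := ⟨2, by omega⟩)
      hx hδ rfl rfl (hx0 _ rfl) hPerron le_rfl
  have happrox₂ (i : Fin n) := hagree ⟨2, by omega⟩ le_rfl ▸ happrox i ⟨2, by omega⟩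
  have hle₀ := le_of_abs_sub_div_le_of_le_div (hw _) h₀₂.le (happrox₂ _)
  have hle₁ := le_of_abs_sub_div_le_of_div_le (hw _) h₁₂.le (happrox₂ _)
  refine ⟨hle₀, hle₁, fun hne => ?_⟩
  have hlt : w' ⟨0, by omega⟩ / w' ⟨1, by omega⟩ < w ⟨0, by omega⟩ / w ⟨1, by omega⟩ := by
    rcases hne with h | h
    · exact div_lt_div₀ (hle₀.lt_of_ne h) hle₁ (hw _).le (hw _)
    · exact div_lt_div₀' hle₀ (hle₁.lt_of_ne' h) (hw _) (hw _)
  refine ⟨hlt, h₀₁, ?_⟩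
  rw [abs_of_pos (sub_pos.2 h₀₁), abs_of_pos (sub_pos.2 (hlt.trans h₀₁))]
  linarith
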